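/- Let K₁ and K₂ be real symmetric n×n matrices all of whose eigenvalues are at least λ₀ > 0, let Y, u₀, v₀ ∈ ℝⁿ, and define the two kernel gradient flow trajectories u(t) = Y + exp(-(t/n)K₁)(u₀ - Y) and v(t) = Y + exp(-(t/n)K₂)(v₀ - Y). Then sup_{t ≥ 0} ‖u(t) - v(t)‖₂ ≤ ‖u₀ - v₀‖₂ + (1/(e·λ₀))·‖K₁ - K₂‖·‖u₀ - Y‖₂, where ‖K₁ - K₂‖ is the operator norm with respect to the Euclidean norm. -/

import Mathlib

/-! With `s = t / n`,
`u t - v t = e^{-sK₂} (u₀ - v₀) + (e^{-sK₁} - e^{-sK₂}) (u₀ - Y)`.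
Diagonalising a symmetric `K` by an orthogonal matrix shows `‖e^{-sK}‖ ≤ e^{-sλ₀} ≤ 1` in the
operator norm, so the first term is at most `‖u₀ - v₀‖`. For the second, the mean value
inequality applied to `θ ↦ e^{θA} e^{(1-θ)B}`, whose derivative is `e^{θA} (A - B) e^{(1-θ)B}`,
gives `‖e^{-sK₁} - e^{-sK₂}‖ ≤ s e^{-sλ₀} ‖K₁ - K₂‖`, and `s e^{-sλ₀} ≤ 1 / (e λ₀)` because
`x ≤ e^{x-1}`. -/

open Matrix

/-- The Euclidean norm on `ℝⁿ`. -/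
noncomputable def eNorm {n : ℕ} (v : Fin n → ℝ) : ℝ :=
  Real.sqrt (∑ i, v i ^ 2)

/-- The operator norm of a matrix with respect to the Euclidean norm:
`sup {‖Mv‖₂ : ‖v‖₂ ≤ 1}`. -/
noncomputable def opNorm {n : ℕ} (M : Matrix (Fin n) (Fin n) ℝ) : ℝ :=
  sSup {c : ℝ | ∃ v : Fin n → ℝ, eNorm v ≤ 1 ∧ c = eNorm (M.mulVec v)}

open scoped Matrix.Norms.L2Operator

theorem Real.mul_exp_neg_mul_le {lam : ℝ} (hlam : 0 < lam) (s : ℝ) :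
    s * Real.exp (-(s * lam)) ≤ 1 / (Real.exp 1 * lam) := by
  have hexp : s * lam * Real.exp 1 ≤ Real.exp (s * lam) := by
    have := Real.add_one_le_exp (s * lam - 1)
    rw [Real.exp_sub, le_div_iff₀ (Real.exp_pos 1)] at this
    linarith
  rw [Real.exp_neg, ← div_eq_mul_inv, div_le_div_iff₀ (Real.exp_pos _) (by positivity)]
  linarith

theorem NormedSpace.norm_exp_sub_exp_le {𝔸 : Type*} [NormedRing 𝔸] [NormedAlgebra ℝ 𝔸]
    [CompleteSpace 𝔸] (A B : 𝔸) {c : ℝ}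
    (hc : ∀ θ ∈ Set.Icc (0 : ℝ) 1, ‖exp (θ • A)‖ * ‖exp ((1 - θ) • B)‖ ≤ c) :
    ‖exp A - exp B‖ ≤ c * ‖A - B‖ := by
  set f : ℝ → 𝔸 := fun θ => exp (θ • A) * exp ((1 - θ) • B)
  have hf : ∀ θ, HasDerivAt f (exp (θ • A) * (A - B) * exp ((1 - θ) • B)) θ := by
    intro θ
    have hB : HasDerivAt (fun θ : ℝ => exp ((1 - θ) • B))
        ((-1 : ℝ) • (exp ((1 - θ) • B) * B)) θ :=
      (hasDerivAt_exp_smul_const (𝕂 := ℝ) B (1 - θ)).scomp θ ((hasDerivAt_id θ).const_sub 1)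
    convert (hasDerivAt_exp_smul_const (𝕂 := ℝ) A θ).mul hB using 1
    · rfl
    · rw [((Commute.refl B).smul_left (1 - θ)).exp_left.eq, neg_one_smul]
      noncomm_ring
  have hf' : ∀ θ ∈ Set.Ico (0 : ℝ) 1,
      ‖exp (θ • A) * (A - B) * exp ((1 - θ) • B)‖ ≤ c * ‖A - B‖ := fun θ hθ =>
    calc _ ≤ ‖exp (θ • A)‖ * ‖A - B‖ * ‖exp ((1 - θ) • B)‖ := norm_mul₃_le
      _ = ‖exp (θ • A)‖ * ‖exp ((1 - θ) • B)‖ * ‖A - B‖ := by ring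
      _ ≤ c * ‖A - B‖ := by gcongr; exact hc θ (Set.Ico_subset_Icc_self hθ)
  simpa [f] using norm_image_sub_le_of_norm_deriv_le_segment'
    (fun θ _ => (hf θ).hasDerivWithinAt) hf' 1 (Set.right_mem_Icc.mpr zero_le_one)

theorem Matrix.IsHermitian.norm_exp_smul_le {n : Type*} [Fintype n] [DecidableEq n]
    {K : Matrix n n ℝ} (hK : K.IsHermitian) (r : ℝ) {c : ℝ}
    (hc : ∀ i, r * hK.eigenvalues i ≤ c) :
    ‖NormedSpace.exp (r • K)‖ ≤ Real.exp c := by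
  set U := hK.eigenvectorUnitary
  set D := diagonal (fun i => r * hK.eigenvalues i)
  have hdiag : r • K = (U : Matrix n n ℝ) * D * star (U : Matrix n n ℝ) := by
    conv_lhs => rw [hK.spectral_theorem]
    rw [Unitary.conjStarAlgAut_apply, ← smul_mul_assoc, ← mul_smul_comm, ← diagonal_smul]
    rfl
  have hconj : NormedSpace.exp ((U : Matrix n n ℝ) * D * star (U : Matrix n n ℝ))
      = U * NormedSpace.exp D * star (U : Matrix n n ℝ) :=
    Matrix.exp_units_conj (Unitary.toUnits U) D
  rw [hdiag, hconj, ← Unitary.coe_star, CStarRing.norm_mul_coe_unitary,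
    CStarRing.norm_coe_unitary_mul, exp_diagonal, l2_opNorm_diagonal]
  refine (pi_norm_le_iff_of_nonneg (Real.exp_nonneg c)).mpr fun i => ?_
  rw [Pi.coe_exp, ← Real.exp_eq_exp_ℝ, Real.norm_of_nonneg (Real.exp_nonneg _)]
  exact Real.exp_le_exp.mpr (hc i)

theorem Matrix.IsHermitian.norm_exp_neg_smul_sub_le {n : Type*} [Fintype n] [DecidableEq n]
    {K₁ K₂ : Matrix n n ℝ} (hK₁ : K₁.IsHermitian) (hK₂ : K₂.IsHermitian) {lam s : ℝ}
    (h₁ : ∀ i, lam ≤ hK₁.eigenvalues i) (h₂ : ∀ i, lam ≤ hK₂.eigenvalues i) (hs : 0 ≤ s) :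
    ‖NormedSpace.exp ((-s) • K₁) - NormedSpace.exp ((-s) • K₂)‖
      ≤ s * Real.exp (-(s * lam)) * ‖K₁ - K₂‖ := by
  have hc : ∀ θ ∈ Set.Icc (0 : ℝ) 1,
      ‖NormedSpace.exp (θ • (-s) • K₁)‖ * ‖NormedSpace.exp ((1 - θ) • (-s) • K₂)‖
        ≤ Real.exp (-(s * lam)) := by
    rintro θ ⟨hθ₀, hθ₁⟩
    rw [smul_smul, smul_smul]
    calc _ ≤ Real.exp (-(θ * s * lam)) * Real.exp (-((1 - θ) * s * lam)) := by
          gcongr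
          · exact hK₁.norm_exp_smul_le _ fun i => by nlinarith [h₁ i, mul_nonneg hθ₀ hs]
          · exact hK₂.norm_exp_smul_le _ fun i => by
              nlinarith [h₂ i, mul_nonneg (sub_nonneg.mpr hθ₁) hs]
      _ = Real.exp (-(s * lam)) := by rw [← Real.exp_add]; ring_nf
  calc _ ≤ Real.exp (-(s * lam)) * ‖(-s) • K₁ - (-s) • K₂‖ :=
        NormedSpace.norm_exp_sub_exp_le _ _ hc
    _ = s * Real.exp (-(s * lam)) * ‖K₁ - K₂‖ := by
        rw [← smul_sub, norm_smul, Real.norm_eq_abs, abs_neg, abs_of_nonneg hs]; ring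

section Euclidean

variable {n : ℕ}

theorem eNorm_eq_norm_toLp (v : Fin n → ℝ) : eNorm v = ‖WithLp.toLp 2 v‖ := by
  simp [eNorm, EuclideanSpace.norm_eq]

theorem eNorm_nonneg (v : Fin n → ℝ) : 0 ≤ eNorm v :=
  Real.sqrt_nonneg _

theorem eNorm_add_le (v w : Fin n → ℝ) : eNorm (v + w) ≤ eNorm v + eNorm w := by
  simpa only [eNorm_eq_norm_toLp, WithLp.toLp_add] using norm_add_le _ _

theorem eNorm_mulVec_le (M : Matrix (Fin n) (Fin n) ℝ) (v : Fin n → ℝ) :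
    eNorm (M *ᵥ v) ≤ ‖M‖ * eNorm v := by
  simpa [eNorm_eq_norm_toLp] using M.l2_opNorm_mulVec (WithLp.toLp 2 v)

theorem opNorm_eq_l2_opNorm (M : Matrix (Fin n) (Fin n) ℝ) : opNorm M = ‖M‖ := by
  rw [opNorm, cstar_norm_def, ← ContinuousLinearMap.sSup_unitClosedBall_eq_norm]
  congr 1
  ext c
  simp only [Set.mem_ofPred_eq, Set.mem_image, Metric.mem_closedBall, dist_zero_right]
  constructor
  · rintro ⟨v, hv, rfl⟩
    exact ⟨WithLp.toLp 2 v, by rwa [← eNorm_eq_norm_toLp], by simp [eNorm_eq_norm_toLp]⟩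
  · rintro ⟨x, hx, rfl⟩
    exact ⟨x.ofLp, by rwa [eNorm_eq_norm_toLp], by
      rw [eNorm_eq_norm_toLp, ← ofLp_toEuclideanCLM, WithLp.toLp_ofLp]⟩

end Euclidean

/-- Comparison of two kernel gradient flow trajectories
`u(t) = Y + exp(-(t/n)K₁)(u₀ - Y)` and `v(t) = Y + exp(-(t/n)K₂)(v₀ - Y)` driven by
symmetric kernel matrices whose eigenvalues are all at least `λ₀ > 0`:
uniformly over `t ≥ 0`,
`‖u(t) - v(t)‖₂ ≤ ‖u₀ - v₀‖₂ + (1/(e λ₀)) ‖K₁ - K₂‖ ‖u₀ - Y‖₂`. -/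
theorem kernel_gradient_flow_comparison
    (n : ℕ) (K₁ K₂ : Matrix (Fin n) (Fin n) ℝ)
    (hK₁ : K₁.IsHermitian) (hK₂ : K₂.IsHermitian)
    (lam0 : ℝ) (hlam0 : 0 < lam0)
    (hmin₁ : ∀ i, lam0 ≤ hK₁.eigenvalues i) (hmin₂ : ∀ i, lam0 ≤ hK₂.eigenvalues i)
    (Y u₀ v₀ : Fin n → ℝ) (u v : ℝ → Fin n → ℝ)
    (hu : ∀ t : ℝ, u t = Y + (NormedSpace.exp ((-(t / n)) • K₁)).mulVec (u₀ - Y))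
    (hv : ∀ t : ℝ, v t = Y + (NormedSpace.exp ((-(t / n)) • K₂)).mulVec (v₀ - Y)) :
    ∀ t : ℝ, 0 ≤ t →
      eNorm (u t - v t)
        ≤ eNorm (u₀ - v₀) + 1 / (Real.exp 1 * lam0) * opNorm (K₁ - K₂) * eNorm (u₀ - Y) := by
  intro t ht
  set s : ℝ := t / n
  have hs : 0 ≤ s := by positivity
  have hsplit : u t - v t = NormedSpace.exp ((-s) • K₂) *ᵥ (u₀ - v₀)
      + (NormedSpace.exp ((-s) • K₁) - NormedSpace.exp ((-s) • K₂)) *ᵥ (u₀ - Y) := by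
    have hut : u t = Y + NormedSpace.exp ((-s) • K₁) *ᵥ (u₀ - Y) := hu t
    have hvt : v t = Y + NormedSpace.exp ((-s) • K₂) *ᵥ (v₀ - Y) := hv t
    simp only [hut, hvt, sub_mulVec, mulVec_sub]
    abel
  have hcontr : ‖NormedSpace.exp ((-s) • K₂)‖ ≤ 1 := by
    simpa using hK₂.norm_exp_smul_le (-s) (c := 0) fun i => by nlinarith [hmin₂ i]
  have hdiff : ‖NormedSpace.exp ((-s) • K₁) - NormedSpace.exp ((-s) • K₂)‖
      ≤ 1 / (Real.exp 1 * lam0) * opNorm (K₁ - K₂) := by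
    rw [opNorm_eq_l2_opNorm]
    exact (hK₁.norm_exp_neg_smul_sub_le hK₂ hmin₁ hmin₂ hs).trans
      (by gcongr; exact Real.mul_exp_neg_mul_le hlam0 s)
  rw [hsplit]
  calc _ ≤ ‖NormedSpace.exp ((-s) • K₂)‖ * eNorm (u₀ - v₀)
        + ‖NormedSpace.exp ((-s) • K₁) - NormedSpace.exp ((-s) • K₂)‖ * eNorm (u₀ - Y) :=
        (eNorm_add_le _ _).trans (add_le_add (eNorm_mulVec_le _ _) (eNorm_mulVec_le _ _))
    _ ≤ 1 * eNorm (u₀ - v₀) + 1 / (Real.exp 1 * lam0) * opNorm (K₁ - K₂) * eNorm (u₀ - Y) := by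
        gcongr
        · exact eNorm_nonneg _
        · exact eNorm_nonneg _
    _ = _ := by rw [one_mul]
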